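/- For all integers s, t, r, the extended shuffle product on depth-one symbols is associative: ([s] ⧢ [t]) ⧢ [r] = [s] ⧢ ([t] ⧢ [r]). -/

import Mathlib

noncomputable section

/-- The vector space ℋ_ℤ with basis the symbols `[s₁,…,s_k]` (lists of integers),
the empty list being the unit `1`. -/
abbrev HZ : Type := List ℤ →₀ ℚ

/-- The basis symbol `[s₁,…,s_k]`. -/
def bs (l : List ℤ) : HZ := Finsupp.single l 1

/-- Linear extension of a map defined on basis symbols. -/
def hlift (f : List ℤ → HZ) : HZ →ₗ[ℚ] HZ := Finsupp.lift HZ ℚ (List ℤ) f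

/-- Prepending a `0` entry to every basis symbol. -/
def preZ : HZ →ₗ[ℚ] HZ := hlift fun l => bs (0 :: l)

/-- The operator `I` adding 1 to the first entry. -/
def Imap : HZ →ₗ[ℚ] HZ := hlift fun l =>
  match l with
  | [] => 0
  | s :: r => bs ((s + 1) :: r)

/-- The operator `J` subtracting 1 from the first entry, with `J(1) = 0`. -/
def Jmap : HZ →ₗ[ℚ] HZ := hlift fun l =>
  match l with
  | [] => 0
  | s :: r => bs ((s - 1) :: r)

/-- The five-case recursion defining the extended shuffle product on ℋ_ℤ. -/
def IsExtShuffle (m : HZ →ₗ[ℚ] HZ →ₗ[ℚ] HZ) : Prop :=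
  (∀ x, m (bs []) x = x) ∧
  (∀ x, m x (bs []) = x) ∧
  (∀ (s' : List ℤ) (t₁ : ℤ) (t' : List ℤ),
    m (bs (0 :: s')) (bs (t₁ :: t')) = preZ (m (bs s') (bs (t₁ :: t')))) ∧
  (∀ (s₁ : ℤ), 0 < s₁ → ∀ (s' t' : List ℤ),
    m (bs (s₁ :: s')) (bs (0 :: t')) = preZ (m (bs (s₁ :: s')) (bs t'))) ∧
  (∀ (s₁ t₁ : ℤ), 0 < s₁ → 0 < t₁ → ∀ (s' t' : List ℤ),
    m (bs (s₁ :: s')) (bs (t₁ :: t')) =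
      Imap (m (bs (s₁ :: s')) (bs ((t₁ - 1) :: t'))) +
      Imap (m (bs ((s₁ - 1) :: s')) (bs (t₁ :: t')))) ∧
  (∀ (s₁ t₁ : ℤ), 0 < s₁ → t₁ < 0 → ∀ (s' t' : List ℤ),
    m (bs (s₁ :: s')) (bs (t₁ :: t')) =
      Jmap (m (bs (s₁ :: s')) (bs ((t₁ + 1) :: t'))) -
      m (bs ((s₁ - 1) :: s')) (bs ((t₁ + 1) :: t'))) ∧
  (∀ (s₁ : ℤ), s₁ < 0 → ∀ (t₁ : ℤ) (s' t' : List ℤ),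
    m (bs (s₁ :: s')) (bs (t₁ :: t')) =
      Jmap (m (bs ((s₁ + 1) :: s')) (bs (t₁ :: t'))) -
      m (bs ((s₁ + 1) :: s')) (bs ((t₁ - 1) :: t')))

/-!
Associativity is proved for all basis symbols, by well-founded induction on the total depth and
then on the absolute values of the three first entries. In each of the seven sign patterns of the
first entries, one recursion rule is unfolded on each side and the induction hypothesis matches the
resulting terms. Two facts make this possible: `J` is a derivation of the product on symbols of
positive depth, and the recursion rules for positive first entries remain valid for linear
combinations of symbols with positive first entries, a class closed under the product.
-/

lemma hlift_bs (f : List ℤ → HZ) (l : List ℤ) : hlift f (bs l) = f l := by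
  simp [hlift, bs]

lemma preZ_bs (l : List ℤ) : preZ (bs l) = bs (0 :: l) := hlift_bs _ _

lemma imap_bs (a : ℤ) (l : List ℤ) : Imap (bs (a :: l)) = bs ((a + 1) :: l) := hlift_bs _ _

lemma jmap_bs (a : ℤ) (l : List ℤ) : Jmap (bs (a :: l)) = bs ((a - 1) :: l) := hlift_bs _ _

lemma jmap_bs_nil : Jmap (bs []) = 0 := hlift_bs _ _

lemma hlift_mem {N : Submodule ℚ HZ} {f : List ℤ → HZ} (hf : ∀ l, f l ∈ N) (x : HZ) :
    hlift f x ∈ N := by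
  rw [hlift, Finsupp.lift_apply]
  exact Submodule.sum_mem _ fun l _ => Submodule.smul_mem _ _ (hf l)

lemma linearMap_ext_bs {M : Type*} [AddCommMonoid M] [Module ℚ M] {f g : HZ →ₗ[ℚ] M}
    (h : ∀ l, f (bs l) = g (bs l)) : f = g :=
  Finsupp.lhom_ext' fun l => LinearMap.ext_ring (h l)

def headSpan (p : ℤ → Prop) : Submodule ℚ HZ :=
  Submodule.span ℚ {x | ∃ a l, p a ∧ x = bs (a :: l)}

section HeadSpan

variable {p q : ℤ → Prop}

lemma bs_mem_headSpan {a : ℤ} (ha : p a) (l : List ℤ) : bs (a :: l) ∈ headSpan p :=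
  Submodule.subset_span ⟨a, l, ha, rfl⟩

lemma bs_mem_headSpan_top (a : ℤ) (l : List ℤ) : bs (a :: l) ∈ headSpan ⊤ :=
  bs_mem_headSpan trivial l

lemma headSpan_mono (h : ∀ a, p a → q a) : headSpan p ≤ headSpan q :=
  Submodule.span_le.2 fun _ ⟨a, l, ha, hx⟩ => hx ▸ bs_mem_headSpan (h a ha) l

lemma eqOn_headSpan {M : Type*} [AddCommMonoid M] [Module ℚ M] {f g : HZ →ₗ[ℚ] M}
    (h : ∀ a l, p a → f (bs (a :: l)) = g (bs (a :: l))) : Set.EqOn f g (headSpan p) :=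
  LinearMap.eqOn_span' fun _ ⟨a, l, ha, hx⟩ => hx ▸ h a l ha

lemma preZ_mem_headSpan (h0 : p 0) (x : HZ) : preZ x ∈ headSpan p :=
  hlift_mem (fun l => bs_mem_headSpan h0 l) x

lemma imap_mem_headSpan_top (x : HZ) : Imap x ∈ headSpan ⊤ := by
  unfold Imap
  refine hlift_mem (fun l => ?_) x
  cases l with
  | nil => exact Submodule.zero_mem _
  | cons a l => exact bs_mem_headSpan_top _ l

lemma jmap_mem_headSpan_top (x : HZ) : Jmap x ∈ headSpan ⊤ := by
  unfold Jmap
  refine hlift_mem (fun l => ?_) x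
  cases l with
  | nil => exact Submodule.zero_mem _
  | cons a l => exact bs_mem_headSpan_top _ l

lemma imap_mem_headSpan {x : HZ} (hx : x ∈ headSpan p) :
    Imap x ∈ headSpan fun a => p (a - 1) := by
  suffices headSpan p ≤ (headSpan fun a => p (a - 1)).comap Imap from this hx
  refine Submodule.span_le.2 fun _ ⟨a, l, ha, hx⟩ => ?_
  rw [hx, SetLike.mem_coe, Submodule.mem_comap, imap_bs]
  exact bs_mem_headSpan (by simpa using ha) l

lemma imap_mem_headSpan_pos {x : HZ} (hx : x ∈ headSpan (0 ≤ ·)) :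
    Imap x ∈ headSpan (0 < ·) :=
  headSpan_mono (fun a ha => by omega) (imap_mem_headSpan hx)

lemma jmap_imap {x : HZ} (hx : x ∈ headSpan ⊤) : Jmap (Imap x) = x :=
  eqOn_headSpan (f := Jmap ∘ₗ Imap) (g := LinearMap.id)
    (fun a l _ => by simp [imap_bs, jmap_bs]) hx

end HeadSpan

def AssocAt (m : HZ →ₗ[ℚ] HZ →ₗ[ℚ] HZ) (l₁ l₂ l₃ : List ℤ) : Prop :=
  m (m (bs l₁) (bs l₂)) (bs l₃) = m (bs l₁) (m (bs l₂) (bs l₃))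

namespace IsExtShuffle

variable {m : HZ →ₗ[ℚ] HZ →ₗ[ℚ] HZ}

lemma one_mul (hm : IsExtShuffle m) (x : HZ) : m (bs []) x = x := hm.1 x

lemma mul_one (hm : IsExtShuffle m) (x : HZ) : m x (bs []) = x := hm.2.1 x

lemma zero_cons_mul (hm : IsExtShuffle m) (u : List ℤ) (b : ℤ) (v : List ℤ) :
    m (bs (0 :: u)) (bs (b :: v)) = preZ (m (bs u) (bs (b :: v))) := hm.2.2.1 u b v

lemma mul_zero_cons (hm : IsExtShuffle m) {a : ℤ} (ha : 0 < a) (u v : List ℤ) :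
    m (bs (a :: u)) (bs (0 :: v)) = preZ (m (bs (a :: u)) (bs v)) := hm.2.2.2.1 a ha u v

lemma pos_mul_pos (hm : IsExtShuffle m) {a b : ℤ} (ha : 0 < a) (hb : 0 < b) (u v : List ℤ) :
    m (bs (a :: u)) (bs (b :: v)) =
      Imap (m (bs (a :: u)) (bs ((b - 1) :: v))) + Imap (m (bs ((a - 1) :: u)) (bs (b :: v))) :=
  hm.2.2.2.2.1 a b ha hb u v

lemma pos_mul_neg (hm : IsExtShuffle m) {a b : ℤ} (ha : 0 < a) (hb : b < 0) (u v : List ℤ) :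
    m (bs (a :: u)) (bs (b :: v)) =
      Jmap (m (bs (a :: u)) (bs ((b + 1) :: v))) - m (bs ((a - 1) :: u)) (bs ((b + 1) :: v)) :=
  hm.2.2.2.2.2.1 a b ha hb u v

lemma neg_mul (hm : IsExtShuffle m) {a : ℤ} (ha : a < 0) (b : ℤ) (u v : List ℤ) :
    m (bs (a :: u)) (bs (b :: v)) =
      Jmap (m (bs ((a + 1) :: u)) (bs (b :: v))) - m (bs ((a + 1) :: u)) (bs ((b - 1) :: v)) :=
  hm.2.2.2.2.2.2 a ha b u v

lemma cons_mul_mem_headSpan_top (hm : IsExtShuffle m) (a : ℤ) (u l : List ℤ) :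
    m (bs (a :: u)) (bs l) ∈ headSpan ⊤ := by
  obtain _ | ⟨b, v⟩ := l
  · rw [hm.mul_one]; exact bs_mem_headSpan_top a u
  rcases lt_trichotomy a 0 with ha | rfl | ha
  · rw [hm.neg_mul ha]
    exact sub_mem (jmap_mem_headSpan_top _) (cons_mul_mem_headSpan_top hm (a + 1) u _)
  · rw [hm.zero_cons_mul]; exact preZ_mem_headSpan trivial _
  rcases lt_trichotomy b 0 with hb | rfl | hb
  · rw [hm.pos_mul_neg ha hb]
    exact sub_mem (jmap_mem_headSpan_top _) (cons_mul_mem_headSpan_top hm (a - 1) u _)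
  · rw [hm.mul_zero_cons ha]; exact preZ_mem_headSpan trivial _
  · rw [hm.pos_mul_pos ha hb]
    exact add_mem (imap_mem_headSpan_top _) (imap_mem_headSpan_top _)
termination_by a.natAbs

lemma cons_mul_cons_mem_headSpan_nonneg (hm : IsExtShuffle m) {a b : ℤ} (ha : 0 ≤ a)
    (hb : 0 ≤ b) (u v : List ℤ) : m (bs (a :: u)) (bs (b :: v)) ∈ headSpan (0 ≤ ·) := by
  obtain rfl | ha := ha.eq_or_lt
  · rw [hm.zero_cons_mul]; exact preZ_mem_headSpan le_rfl _
  obtain rfl | hb := hb.eq_or_lt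
  · rw [hm.mul_zero_cons ha]; exact preZ_mem_headSpan le_rfl _
  rw [hm.pos_mul_pos ha hb]
  refine add_mem (headSpan_mono (fun _ => le_of_lt) (imap_mem_headSpan_pos ?_))
    (headSpan_mono (fun _ => le_of_lt) (imap_mem_headSpan_pos ?_))
  · exact cons_mul_cons_mem_headSpan_nonneg hm ha.le (by omega) u v
  · exact cons_mul_cons_mem_headSpan_nonneg hm (by omega) hb.le u v
termination_by (a + b).toNat

lemma cons_mul_cons_mem_headSpan_pos (hm : IsExtShuffle m) {a b : ℤ} (ha : 0 < a) (hb : 0 < b)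
    (u v : List ℤ) : m (bs (a :: u)) (bs (b :: v)) ∈ headSpan (0 < ·) := by
  rw [hm.pos_mul_pos ha hb]
  exact add_mem
    (imap_mem_headSpan_pos (hm.cons_mul_cons_mem_headSpan_nonneg ha.le (by omega) u v))
    (imap_mem_headSpan_pos (hm.cons_mul_cons_mem_headSpan_nonneg (by omega) hb.le u v))

/-- Rule 7 at first entry `a - 1`, or rule 6 at second entry `b - 1`, read backwards; when both
entries are positive, `J` undoes the `I` of rule 5. -/
lemma jmap_cons_mul_cons (hm : IsExtShuffle m) (a b : ℤ) (u v : List ℤ) :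
    Jmap (m (bs (a :: u)) (bs (b :: v))) =
      m (bs ((a - 1) :: u)) (bs (b :: v)) + m (bs (a :: u)) (bs ((b - 1) :: v)) := by
  by_cases ha : a ≤ 0
  · have h := hm.neg_mul (a := a - 1) (by omega) b u v
    rw [sub_add_cancel] at h
    rw [h, sub_add_cancel]
  by_cases hb : b ≤ 0
  · have h := hm.pos_mul_neg (a := a) (b := b - 1) (by omega) (by omega) u v
    rw [sub_add_cancel] at h
    rw [h, add_sub_cancel]
  rw [hm.pos_mul_pos (by omega) (by omega), map_add,
    jmap_imap (hm.cons_mul_mem_headSpan_top _ _ _),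
    jmap_imap (hm.cons_mul_mem_headSpan_top _ _ _), add_comm]

lemma jmap_mul_cons (hm : IsExtShuffle m) {x : HZ} (hx : x ∈ headSpan ⊤) (b : ℤ)
    (l : List ℤ) :
    Jmap (m x (bs (b :: l))) = m (Jmap x) (bs (b :: l)) + m x (bs ((b - 1) :: l)) :=
  eqOn_headSpan (f := Jmap ∘ₗ m.flip (bs (b :: l)))
    (g := m.flip (bs (b :: l)) ∘ₗ Jmap + m.flip (bs ((b - 1) :: l)))
    (fun a u _ => by simp [jmap_bs, hm.jmap_cons_mul_cons]) hx

lemma jmap_cons_mul (hm : IsExtShuffle m) (a : ℤ) (u : List ℤ) {y : HZ}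
    (hy : y ∈ headSpan ⊤) :
    Jmap (m (bs (a :: u)) y) = m (bs ((a - 1) :: u)) y + m (bs (a :: u)) (Jmap y) :=
  eqOn_headSpan (f := Jmap ∘ₗ m (bs (a :: u)))
    (g := m (bs ((a - 1) :: u)) + m (bs (a :: u)) ∘ₗ Jmap)
    (fun b v _ => by simp [jmap_bs, hm.jmap_cons_mul_cons]) hy

lemma preZ_mul (hm : IsExtShuffle m) (x y : HZ) : m (preZ x) y = preZ (m x y) := by
  refine LinearMap.congr_fun₂ (f := m ∘ₗ preZ) (g := m.compr₂ preZ)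
    (linearMap_ext_bs fun l => linearMap_ext_bs fun l' => ?_) x y
  simp only [LinearMap.comp_apply, LinearMap.compr₂_apply, preZ_bs]
  cases l' with
  | nil => rw [hm.mul_one, hm.mul_one, preZ_bs]
  | cons b v => exact hm.zero_cons_mul l b v

lemma cons_mul_preZ (hm : IsExtShuffle m) {a : ℤ} (ha : 0 < a) (u : List ℤ) (y : HZ) :
    m (bs (a :: u)) (preZ y) = preZ (m (bs (a :: u)) y) := by
  refine LinearMap.congr_fun (f := m (bs (a :: u)) ∘ₗ preZ) (g := preZ ∘ₗ m (bs (a :: u)))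
    (linearMap_ext_bs fun l => ?_) y
  simp only [LinearMap.comp_apply, preZ_bs, hm.mul_zero_cons ha]

lemma mul_zero_cons_of_mem (hm : IsExtShuffle m) {x : HZ} (hx : x ∈ headSpan (0 < ·))
    (w : List ℤ) : m x (bs (0 :: w)) = preZ (m x (bs w)) :=
  eqOn_headSpan (f := m.flip (bs (0 :: w))) (g := preZ ∘ₗ m.flip (bs w))
    (fun _ u ha => hm.mul_zero_cons ha u w) hx

lemma mul_pos_cons_of_mem (hm : IsExtShuffle m) {x : HZ} (hx : x ∈ headSpan (0 < ·)) {c : ℤ}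
    (hc : 0 < c) (w : List ℤ) :
    m x (bs (c :: w)) = Imap (m x (bs ((c - 1) :: w))) + Imap (m (Jmap x) (bs (c :: w))) :=
  eqOn_headSpan (f := m.flip (bs (c :: w)))
    (g := Imap ∘ₗ m.flip (bs ((c - 1) :: w)) + Imap ∘ₗ m.flip (bs (c :: w)) ∘ₗ Jmap)
    (fun _ u ha => by simp [jmap_bs, hm.pos_mul_pos ha hc]) hx

lemma pos_cons_mul_of_mem (hm : IsExtShuffle m) {a : ℤ} (ha : 0 < a) (u : List ℤ) {y : HZ}
    (hy : y ∈ headSpan (0 < ·)) :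
    m (bs (a :: u)) y = Imap (m (bs (a :: u)) (Jmap y)) + Imap (m (bs ((a - 1) :: u)) y) :=
  eqOn_headSpan (f := m (bs (a :: u)))
    (g := Imap ∘ₗ m (bs (a :: u)) ∘ₗ Jmap + Imap ∘ₗ m (bs ((a - 1) :: u)))
    (fun _ v hb => by simp [jmap_bs, hm.pos_mul_pos ha hb]) hy

lemma neg_cons_mul (hm : IsExtShuffle m) {a : ℤ} (ha : a < 0) (u : List ℤ) (y : HZ) :
    m (bs (a :: u)) y = Jmap (m (bs ((a + 1) :: u)) y) - m (bs ((a + 1) :: u)) (Jmap y) := by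
  refine LinearMap.congr_fun (f := m (bs (a :: u)))
    (g := Jmap ∘ₗ m (bs ((a + 1) :: u)) - m (bs ((a + 1) :: u)) ∘ₗ Jmap)
    (linearMap_ext_bs fun l => ?_) y
  cases l with
  | nil => simp [hm.mul_one, jmap_bs, jmap_bs_nil]
  | cons b v => simp [jmap_bs, hm.neg_mul ha]

section Assoc

variable {a b c : ℤ} {u v w : List ℤ}

lemma assocAt_of_neg_left (hm : IsExtShuffle m) (ha : a < 0)
    (h₁ : AssocAt m ((a + 1) :: u) (b :: v) (c :: w))
    (h₂ : AssocAt m ((a + 1) :: u) (b :: v) ((c - 1) :: w))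
    (h₃ : AssocAt m ((a + 1) :: u) ((b - 1) :: v) (c :: w)) :
    AssocAt m (a :: u) (b :: v) (c :: w) := by
  unfold AssocAt at *
  rw [hm.neg_mul ha, map_sub, LinearMap.sub_apply, hm.neg_cons_mul ha,
    hm.jmap_cons_mul_cons b c, map_add,
    ← h₁, ← h₂, ← h₃, hm.jmap_mul_cons (hm.cons_mul_mem_headSpan_top _ _ _)]
  abel

lemma assocAt_zero_left (hm : IsExtShuffle m) (h : AssocAt m u (b :: v) (c :: w)) :
    AssocAt m (0 :: u) (b :: v) (c :: w) := by
  unfold AssocAt at *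
  rw [hm.zero_cons_mul, hm.preZ_mul, h, ← preZ_bs, hm.preZ_mul]

lemma assocAt_of_neg_mid (hm : IsExtShuffle m) (ha : 0 < a) (hb : b < 0)
    (h₁ : AssocAt m (a :: u) ((b + 1) :: v) (c :: w))
    (h₂ : AssocAt m (a :: u) ((b + 1) :: v) ((c - 1) :: w))
    (h₃ : AssocAt m ((a - 1) :: u) ((b + 1) :: v) (c :: w)) :
    AssocAt m (a :: u) (b :: v) (c :: w) := by
  unfold AssocAt at *
  have hJ := hm.jmap_cons_mul a u (hm.cons_mul_mem_headSpan_top (b + 1) v (c :: w))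
  have hJ' := hm.jmap_mul_cons (hm.cons_mul_mem_headSpan_top a u ((b + 1) :: v)) c w
  rw [h₁] at hJ'
  rw [hm.pos_mul_neg ha hb, map_sub, LinearMap.sub_apply, hm.neg_mul hb, map_sub]
  linear_combination (norm := module) hJ - hJ' - h₂ - h₃

lemma assocAt_zero_mid (hm : IsExtShuffle m) (ha : 0 < a)
    (h : AssocAt m (a :: u) v (c :: w)) :
    AssocAt m (a :: u) (0 :: v) (c :: w) := by
  unfold AssocAt at *
  rw [hm.mul_zero_cons ha, hm.preZ_mul, h, hm.zero_cons_mul, hm.cons_mul_preZ ha]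

lemma assocAt_of_neg_right (hm : IsExtShuffle m) (hb : 0 < b) (hc : c < 0)
    (h₁ : AssocAt m (a :: u) (b :: v) ((c + 1) :: w))
    (h₂ : AssocAt m ((a - 1) :: u) (b :: v) ((c + 1) :: w))
    (h₃ : AssocAt m (a :: u) ((b - 1) :: v) ((c + 1) :: w)) :
    AssocAt m (a :: u) (b :: v) (c :: w) := by
  unfold AssocAt at *
  have hJ := hm.jmap_mul_cons (hm.cons_mul_mem_headSpan_top a u (b :: v)) (c + 1) w
  have hJ' := hm.jmap_cons_mul a u (hm.cons_mul_mem_headSpan_top b v ((c + 1) :: w))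
  rw [add_sub_cancel_right, hm.jmap_cons_mul_cons, map_add, LinearMap.add_apply, h₁, h₂, h₃]
    at hJ
  rw [hm.pos_mul_neg hb hc, map_sub]
  linear_combination (norm := module) hJ' - hJ

lemma assocAt_zero_right (hm : IsExtShuffle m) (ha : 0 < a) (hb : 0 < b)
    (h : AssocAt m (a :: u) (b :: v) w) :
    AssocAt m (a :: u) (b :: v) (0 :: w) := by
  unfold AssocAt at *
  rw [hm.mul_zero_cons_of_mem (hm.cons_mul_cons_mem_headSpan_pos ha hb u v), h,
    hm.mul_zero_cons hb, hm.cons_mul_preZ ha]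

lemma assocAt_of_pos (hm : IsExtShuffle m) (ha : 0 < a) (hb : 0 < b) (hc : 0 < c)
    (h₁ : AssocAt m (a :: u) (b :: v) ((c - 1) :: w))
    (h₂ : AssocAt m ((a - 1) :: u) (b :: v) (c :: w))
    (h₃ : AssocAt m (a :: u) ((b - 1) :: v) (c :: w)) :
    AssocAt m (a :: u) (b :: v) (c :: w) := by
  unfold AssocAt at *
  rw [hm.mul_pos_cons_of_mem (hm.cons_mul_cons_mem_headSpan_pos ha hb u v) hc,
    hm.pos_cons_mul_of_mem ha u (hm.cons_mul_cons_mem_headSpan_pos hb hc v w),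
    hm.jmap_cons_mul_cons, hm.jmap_cons_mul_cons]
  simp only [map_add, LinearMap.add_apply]
  rw [h₁, h₂, h₃]
  abel

end Assoc

theorem assocAt (hm : IsExtShuffle m) : ∀ l₁ l₂ l₃ : List ℤ, AssocAt m l₁ l₂ l₃
  | [], _, _ => by rw [AssocAt, hm.one_mul, hm.one_mul]
  | _ :: _, [], _ => by rw [AssocAt, hm.mul_one, hm.one_mul]
  | _ :: _, _ :: _, [] => by rw [AssocAt, hm.mul_one, hm.mul_one]
  | a :: u, b :: v, c :: w => by
    rcases lt_trichotomy a 0 with ha | rfl | ha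
    · exact hm.assocAt_of_neg_left ha (hm.assocAt _ _ _) (hm.assocAt _ _ _) (hm.assocAt _ _ _)
    · exact hm.assocAt_zero_left (hm.assocAt _ _ _)
    rcases lt_trichotomy b 0 with hb | rfl | hb
    · exact hm.assocAt_of_neg_mid ha hb (hm.assocAt _ _ _) (hm.assocAt _ _ _) (hm.assocAt _ _ _)
    · exact hm.assocAt_zero_mid ha (hm.assocAt _ _ _)
    rcases lt_trichotomy c 0 with hc | rfl | hc
    · exact hm.assocAt_of_neg_right hb hc (hm.assocAt _ _ _) (hm.assocAt _ _ _) (hm.assocAt _ _ _)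
    · exact hm.assocAt_zero_right ha hb (hm.assocAt _ _ _)
    · exact hm.assocAt_of_pos ha hb hc (hm.assocAt _ _ _) (hm.assocAt _ _ _) (hm.assocAt _ _ _)
termination_by l₁ l₂ l₃ =>
  (l₁.length + l₂.length + l₃.length, l₁.headI.natAbs, l₂.headI.natAbs, l₃.headI.natAbs)
decreasing_by all_goals simp_wf; simp only [Prod.lex_def, true_and]; omega

end IsExtShuffle

/-- Associativity of the extended shuffle product on depth-one symbols. -/
theorem extended_shuffle_assoc_depth_one (m : HZ →ₗ[ℚ] HZ →ₗ[ℚ] HZ) (hm : IsExtShuffle m) :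
    ∀ s t r : ℤ, m (m (bs [s]) (bs [t])) (bs [r]) = m (bs [s]) (m (bs [t]) (bs [r])) :=
  fun s t r => hm.assocAt [s] [t] [r]
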